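/- Let r ∈ ℓ²(ℤ) have nonnegative entries, with norm ‖r‖ and tail norms E_N(r). There is an absolute constant C such that for every N ≥ 1, Σ_{|n|>N} Σ_{i,j,p≠n} r(n+i)²r(j+p)²/(|n-i||n-j|(n-p)²) ≤ C(‖r‖²/N + E_N(r)²)·‖r‖². -/

import Mathlib

/-!
Write `R = r²` and substitute `a = n - i`, `b = n - j`, `c = n - p`, so that `n + i = 2n - a` and
`j + p = 2n - b - c`; the inequality `1 / (|a| |b|) ≤ 1 / a² + 1 / b²` splits the sum in two.
In each part one factor of `R` is summed freely, giving `‖r‖²`, and the other is summed over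
`|n| > N` at the points `2n - m`. That sum is at most `E_N(r)²` when `|m| ≤ N`, because then
`|2n - m| ≥ N`, and at most `‖r‖²` otherwise; in the latter case the weights `1 / a²`, `1 / b²`
only contribute their tails beyond `N / 2`, which are `O(1 / N)`.
All rearrangements are done in `ℝ≥0∞`, where they need no summability.
-/

open scoped ENNReal

-- `invSq 0 = 0` since `(0 : ℝ)⁻¹ = 0`, so sums of `invSq` may run over all of `ℤ`.
noncomputable def invSq (k : ℤ) : ℝ≥0∞ := ENNReal.ofReal ((k : ℝ) ^ 2)⁻¹

lemma ofReal_tsum_le_tsum_ofReal {ι : Type*} {f : ι → ℝ} (hf : ∀ i, 0 ≤ f i) :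
    ENNReal.ofReal (∑' i, f i) ≤ ∑' i, ENNReal.ofReal (f i) := by
  by_cases h : Summable f
  · rw [ENNReal.ofReal_tsum_of_nonneg hf h]
  · simp [tsum_eq_zero_of_not_summable h]

lemma inv_abs_mul_abs_le (x y : ℝ) : (|x| * |y|)⁻¹ ≤ (x ^ 2)⁻¹ + (y ^ 2)⁻¹ := by
  rcases eq_or_ne x 0 with rfl | hx
  · simp [sq_nonneg]
  rcases eq_or_ne y 0 with rfl | hy
  · simp [sq_nonneg]
  have hx' : 0 < |x| := abs_pos.mpr hx
  have hy' : 0 < |y| := abs_pos.mpr hy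
  rw [← sq_abs x, ← sq_abs y, inv_eq_one_div, inv_eq_one_div, inv_eq_one_div,
    div_add_div _ _ (by positivity) (by positivity),
    div_le_div_iff₀ (by positivity) (by positivity)]
  nlinarith [sq_nonneg (|x| - |y|), mul_pos hx' hy']

lemma tsum_nat_inv_sq_gt_le (M : ℕ) :
    ∑' i : ℕ, (if M < i then ENNReal.ofReal ((i : ℝ) ^ 2)⁻¹ else 0) ≤ 2 / (M + 1) := by
  refine ENNReal.tsum_le_of_sum_range_le fun n => ?_
  have hIoo : (Finset.range n).filter (M < ·) ⊆ Finset.Ioo M n := by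
    intro i; simp only [Finset.mem_filter, Finset.mem_range, Finset.mem_Ioo]; omega
  calc ∑ i ∈ Finset.range n, (if M < i then ENNReal.ofReal ((i : ℝ) ^ 2)⁻¹ else 0)
      = ENNReal.ofReal (∑ i ∈ (Finset.range n).filter (M < ·), ((i : ℝ) ^ 2)⁻¹) := by
        rw [Finset.sum_ite, Finset.sum_const_zero, add_zero,
          ENNReal.ofReal_sum_of_nonneg fun i _ => by positivity]
    _ ≤ ENNReal.ofReal (2 / (M + 1)) :=
        ENNReal.ofReal_le_ofReal ((Finset.sum_le_sum_of_subset_of_nonneg hIoo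
          fun i _ _ => by positivity).trans (sum_Ioo_inv_sq_le M n))
    _ = 2 / (M + 1) := by
        rw [ENNReal.ofReal_div_of_pos (by positivity), ← Nat.cast_succ, ENNReal.ofReal_natCast,
          ENNReal.ofReal_ofNat]
        push_cast; rfl

lemma tsum_invSq_gt_le (M : ℕ) :
    ∑' k : ℤ, (if (M : ℤ) < |k| then invSq k else 0) ≤ 4 / (M + 1) := by
  set g : ℕ → ℝ≥0∞ := fun i => if M < i then ENNReal.ofReal ((i : ℝ) ^ 2)⁻¹ else 0
  have hpos : ∀ n : ℕ, (if (M : ℤ) < |(n : ℤ)| then invSq n else 0) = g n := by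
    intro n; simp [g, invSq]
  have hneg : ∀ n : ℕ, (if (M : ℤ) < |-((n : ℤ) + 1)| then invSq (-((n : ℤ) + 1)) else 0)
      = g (n + 1) := by
    intro n
    simp only [g, invSq, abs_neg, Int.cast_neg, neg_sq]
    rw [abs_of_nonneg (by positivity)]
    norm_cast
  rw [tsum_of_nat_of_neg_add_one ENNReal.summable ENNReal.summable, tsum_congr hpos,
    tsum_congr hneg]
  calc ∑' n, g n + ∑' n, g (n + 1) ≤ 2 / (M + 1) + 2 / (M + 1) :=
        add_le_add (tsum_nat_inv_sq_gt_le M)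
          ((ENNReal.tsum_comp_le_tsum_of_injective (add_left_injective 1) g).trans
            (tsum_nat_inv_sq_gt_le M))
    _ = 4 / (M + 1) := by rw [ENNReal.div_add_div_same]; norm_num

lemma tsum_invSq_le : ∑' k : ℤ, invSq k ≤ 4 := by
  have h : ∀ k : ℤ, (if ((0 : ℕ) : ℤ) < |k| then invSq k else 0) = invSq k := by
    intro k
    rcases eq_or_ne k 0 with rfl | hk
    · simp [invSq]
    · simp [hk]
  have h0 := tsum_invSq_gt_le 0
  rw [tsum_congr h] at h0
  simpa using h0

lemma tsum_tsum_invSq_mul_invSq_gt_le (N : ℕ) :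
    ∑' b, ∑' c, (if (N : ℤ) < |b + c| then invSq b * invSq c else 0)
      ≤ 8 * (4 / ((N / 2 : ℕ) + 1)) := by
  set T : ℤ → ℝ≥0∞ := fun k => if ((N / 2 : ℕ) : ℤ) < |k| then invSq k else 0
  have hsplit : ∀ b c : ℤ, (if (N : ℤ) < |b + c| then invSq b * invSq c else 0)
      ≤ T b * invSq c + invSq b * T c := by
    intro b c
    split_ifs with h
    · have : ((N / 2 : ℕ) : ℤ) < |b| ∨ ((N / 2 : ℕ) : ℤ) < |c| := by
        have := abs_add_le b c
        omega
      rcases this with hb | hc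
      · exact le_add_right (by simp only [T, if_pos hb, le_refl])
      · exact le_add_left (by simp only [T, if_pos hc, le_refl])
    · exact zero_le
  calc ∑' b, ∑' c, (if (N : ℤ) < |b + c| then invSq b * invSq c else 0)
      ≤ ∑' b, ∑' c, (T b * invSq c + invSq b * T c) :=
        ENNReal.tsum_le_tsum fun b => ENNReal.tsum_le_tsum fun c => hsplit b c
    _ = (∑' b, T b) * ∑' c, invSq c + (∑' b, invSq b) * ∑' c, T c := by
        simp only [ENNReal.tsum_add, ENNReal.tsum_mul_left, ENNReal.tsum_mul_right]
    _ ≤ 4 / ((N / 2 : ℕ) + 1) * 4 + 4 * (4 / ((N / 2 : ℕ) + 1)) := by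
        gcongr
        all_goals first | exact tsum_invSq_le | exact tsum_invSq_gt_le _
    _ = 8 * (4 / ((N / 2 : ℕ) + 1)) := by ring

lemma four_div_succ_half_le (N : ℕ) : (4 : ℝ≥0∞) / ((N / 2 : ℕ) + 1) ≤ 8 / N :=
  calc (4 : ℝ≥0∞) / ((N / 2 : ℕ) + 1) = 2 * 4 / (2 * ((N / 2 : ℕ) + 1)) :=
        (ENNReal.mul_div_mul_left _ _ two_ne_zero ENNReal.ofNat_ne_top).symm
    _ ≤ 8 / N := ENNReal.div_le_div (by norm_num) (by norm_cast; omega)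

section
variable (R : ℤ → ℝ≥0∞) (N : ℕ)

lemma tsum_comp_sub_left (m : ℤ) : ∑' a, R (m - a) = ∑' k, R k :=
  Equiv.tsum_eq (Equiv.subLeft m) R

lemma tsum_tail_comp_two_mul_sub_le (m : ℤ) :
    ∑' n : {n : ℤ // (N : ℤ) < |n|}, R (2 * n - m)
      ≤ (∑' k : {k : ℤ // (N : ℤ) ≤ |k|}, R k) + if (N : ℤ) < |m| then ∑' k, R k else 0 := by
  by_cases hm : (N : ℤ) < |m|
  · rw [if_pos hm]
    refine le_add_left (ENNReal.tsum_comp_le_tsum_of_injective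
      (f := fun n : {n : ℤ // (N : ℤ) < |n|} => 2 * (n : ℤ) - m) (fun a b hab => ?_) R)
    exact Subtype.ext (by simp only at hab; omega)
  · rw [if_neg hm, add_zero]
    have hmem : ∀ n : {n : ℤ // (N : ℤ) < |n|}, (N : ℤ) ≤ |2 * (n : ℤ) - m| := by
      intro n
      have hn := n.2
      have := abs_sub_abs_le_abs_sub (2 * (n : ℤ)) m
      rw [abs_mul, abs_two] at this
      omega
    refine ENNReal.tsum_comp_le_tsum_of_injective
      (f := fun n : {n : ℤ // (N : ℤ) < |n|} => (⟨2 * (n : ℤ) - m, hmem n⟩ :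
        {k : ℤ // (N : ℤ) ≤ |k|})) (fun a b hab => ?_) (fun k => R k)
    exact Subtype.ext (by simp only [Subtype.mk.injEq] at hab; omega)

lemma tsum_tsum_sub_sub_mul_invSq_le (m : ℤ) :
    ∑' b, ∑' c, R (m - b - c) * invSq c ≤ (∑' k, R k) * 4 :=
  calc ∑' b, ∑' c, R (m - b - c) * invSq c
      = ∑' c, (∑' b, R (m - c - b)) * invSq c := by
        rw [ENNReal.tsum_comm]
        refine tsum_congr fun c => ?_
        rw [← ENNReal.tsum_mul_right]
        exact tsum_congr fun b => by rw [sub_right_comm]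
    _ = (∑' k, R k) * ∑' c, invSq c := by
        simp only [tsum_comp_sub_left, ENNReal.tsum_mul_left]
    _ ≤ (∑' k, R k) * 4 := by gcongr; exact tsum_invSq_le

lemma tsum_tail_quad_weight_ac_le :
    ∑' n : {n : ℤ // (N : ℤ) < |n|}, ∑' a, ∑' b, ∑' c,
        R (2 * n - a) * R (2 * n - b - c) * (invSq a * invSq c)
      ≤ (∑' k, R k) * 4 *
          ((∑' k : {k : ℤ // (N : ℤ) ≤ |k|}, R k) * 4 + (∑' k, R k) * (4 / (N + 1))) := by
  set S := ∑' k, R k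
  set E := ∑' k : {k : ℤ // (N : ℤ) ≤ |k|}, R k
  calc ∑' n : {n : ℤ // (N : ℤ) < |n|}, ∑' a, ∑' b, ∑' c,
        R (2 * n - a) * R (2 * n - b - c) * (invSq a * invSq c)
      = ∑' n : {n : ℤ // (N : ℤ) < |n|}, ∑' a, R (2 * n - a) * invSq a *
          ∑' b, ∑' c, R (2 * n - b - c) * invSq c := by
        refine tsum_congr fun n => tsum_congr fun a => ?_
        rw [← ENNReal.tsum_mul_left]
        refine tsum_congr fun b => ?_
        rw [← ENNReal.tsum_mul_left]
        exact tsum_congr fun c => by ring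
    _ ≤ ∑' n : {n : ℤ // (N : ℤ) < |n|}, ∑' a, R (2 * n - a) * invSq a * (S * 4) := by
        gcongr with n a
        exact tsum_tsum_sub_sub_mul_invSq_le R _
    _ = S * 4 * ∑' a, (∑' n : {n : ℤ // (N : ℤ) < |n|}, R (2 * n - a)) * invSq a := by
        rw [ENNReal.tsum_comm, ← ENNReal.tsum_mul_left]
        refine tsum_congr fun a => ?_
        rw [ENNReal.tsum_mul_right, ENNReal.tsum_mul_right]
        ring
    _ ≤ S * 4 * ∑' a, (E + if (N : ℤ) < |a| then S else 0) * invSq a := by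
        gcongr with a
        exact tsum_tail_comp_two_mul_sub_le R N a
    _ = S * 4 * (E * ∑' a, invSq a + S * ∑' a, if (N : ℤ) < |a| then invSq a else 0) := by
        simp only [add_mul, ite_mul, zero_mul, ENNReal.tsum_add,
          ← ENNReal.tsum_mul_left, mul_ite, mul_zero]
    _ ≤ S * 4 * (E * 4 + S * (4 / (N + 1))) := by
        gcongr
        · exact tsum_invSq_le
        · exact tsum_invSq_gt_le N

lemma tsum_tail_quad_weight_bc_le :
    ∑' n : {n : ℤ // (N : ℤ) < |n|}, ∑' a, ∑' b, ∑' c,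
        R (2 * n - a) * R (2 * n - b - c) * (invSq b * invSq c)
      ≤ (∑' k, R k) * ((∑' k : {k : ℤ // (N : ℤ) ≤ |k|}, R k) * (4 * 4)
          + (∑' k, R k) * (8 * (4 / ((N / 2 : ℕ) + 1)))) := by
  set S := ∑' k, R k
  set E := ∑' k : {k : ℤ // (N : ℤ) ≤ |k|}, R k
  calc ∑' n : {n : ℤ // (N : ℤ) < |n|}, ∑' a, ∑' b, ∑' c,
        R (2 * n - a) * R (2 * n - b - c) * (invSq b * invSq c)
      = ∑' n : {n : ℤ // (N : ℤ) < |n|}, (∑' a, R (2 * n - a)) *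
          ∑' b, ∑' c, R (2 * n - (b + c)) * (invSq b * invSq c) := by
        refine tsum_congr fun n => ?_
        rw [← ENNReal.tsum_mul_right]
        refine tsum_congr fun a => ?_
        rw [← ENNReal.tsum_mul_left]
        refine tsum_congr fun b => ?_
        rw [← ENNReal.tsum_mul_left]
        exact tsum_congr fun c => by rw [sub_sub, mul_assoc]
    _ = S * ∑' b, ∑' c, (∑' n : {n : ℤ // (N : ℤ) < |n|}, R (2 * n - (b + c))) *
          (invSq b * invSq c) := by
        simp only [tsum_comp_sub_left, ENNReal.tsum_mul_left]
        congr 1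
        rw [ENNReal.tsum_comm]
        refine tsum_congr fun b => ?_
        rw [ENNReal.tsum_comm]
        exact tsum_congr fun c => ENNReal.tsum_mul_right
    _ ≤ S * ∑' b, ∑' c, (E + if (N : ℤ) < |b + c| then S else 0) * (invSq b * invSq c) := by
        gcongr with b c
        exact tsum_tail_comp_two_mul_sub_le R N (b + c)
    _ = S * (E * ∑' b, ∑' c, invSq b * invSq c
          + S * ∑' b, ∑' c, if (N : ℤ) < |b + c| then invSq b * invSq c else 0) := by
        simp only [add_mul, ite_mul, zero_mul, ENNReal.tsum_add, ← ENNReal.tsum_mul_left,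
          mul_ite, mul_zero]
    _ ≤ S * (E * (4 * 4) + S * (8 * (4 / ((N / 2 : ℕ) + 1)))) := by
        have hW : ∑' b, ∑' c, invSq b * invSq c ≤ 4 * 4 := by
          simp only [ENNReal.tsum_mul_left, ENNReal.tsum_mul_right]
          gcongr <;> exact tsum_invSq_le
        gcongr
        exact tsum_tsum_invSq_mul_invSq_gt_le N

lemma tsum_tail_quad_le :
    ∑' n : {n : ℤ // (N : ℤ) < |n|}, ∑' a, ∑' b, ∑' c,
        R (2 * n - a) * R (2 * n - b - c) * ((invSq a + invSq b) * invSq c)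
      ≤ 80 * ((∑' k, R k) / N + ∑' k : {k : ℤ // (N : ℤ) ≤ |k|}, R k) * ∑' k, R k := by
  set S := ∑' k, R k
  set E := ∑' k : {k : ℤ // (N : ℤ) ≤ |k|}, R k
  have hN : (4 : ℝ≥0∞) / (N + 1) ≤ 4 / N := ENNReal.div_le_div_left le_self_add 4
  calc ∑' n : {n : ℤ // (N : ℤ) < |n|}, ∑' a, ∑' b, ∑' c,
        R (2 * n - a) * R (2 * n - b - c) * ((invSq a + invSq b) * invSq c)
      = (∑' n : {n : ℤ // (N : ℤ) < |n|}, ∑' a, ∑' b, ∑' c,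
          R (2 * n - a) * R (2 * n - b - c) * (invSq a * invSq c))
        + ∑' n : {n : ℤ // (N : ℤ) < |n|}, ∑' a, ∑' b, ∑' c,
          R (2 * n - a) * R (2 * n - b - c) * (invSq b * invSq c) := by
        simp only [add_mul, mul_add, ENNReal.tsum_add]
    _ ≤ S * 4 * (E * 4 + S * (4 / N)) + S * (E * (4 * 4) + S * (8 * (8 / N))) := by
        gcongr
        · exact (tsum_tail_quad_weight_ac_le R N).trans (by gcongr)
        · refine (tsum_tail_quad_weight_bc_le R N).trans ?_
          gcongr S * (E * (4 * 4) + S * (8 * ?_))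
          exact four_div_succ_half_le N
    _ = 32 * (S * E) + 80 * (S * S / N) := by simp only [div_eq_mul_inv]; ring
    _ ≤ 80 * (S * E) + 80 * (S * S / N) := by gcongr; norm_num
    _ = 80 * (S / N + E) * S := by simp only [div_eq_mul_inv]; ring

end

lemma tsum_ne_le_tsum_sub (f : ℤ → ℝ≥0∞) (n : ℤ) : ∑' i : {i : ℤ // i ≠ n}, f i ≤ ∑' a, f (n - a) :=
  (ENNReal.tsum_comp_le_tsum_of_injective Subtype.val_injective f).trans
    (tsum_comp_sub_left f n).ge

lemma tsum_ne_tsum_ne_tsum_ne_le_tsum_sub (F : ℤ → ℤ → ℤ → ℝ≥0∞) (n : ℤ) :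
    ∑' i : {i : ℤ // i ≠ n}, ∑' j : {j : ℤ // j ≠ n}, ∑' p : {p : ℤ // p ≠ n}, F i j p
      ≤ ∑' a, ∑' b, ∑' c, F (n - a) (n - b) (n - c) :=
  calc _ ≤ ∑' i : {i : ℤ // i ≠ n}, ∑' j : {j : ℤ // j ≠ n}, ∑' c, F i j (n - c) :=
        ENNReal.tsum_le_tsum fun _ => ENNReal.tsum_le_tsum fun _ => tsum_ne_le_tsum_sub _ n
    _ ≤ ∑' i : {i : ℤ // i ≠ n}, ∑' b, ∑' c, F i (n - b) (n - c) :=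
        ENNReal.tsum_le_tsum fun i => tsum_ne_le_tsum_sub (fun j => ∑' c, F i j (n - c)) n
    _ ≤ _ := tsum_ne_le_tsum_sub (fun i => ∑' b, ∑' c, F i (n - b) (n - c)) n

lemma ofReal_quad_term_le (r : ℤ → ℝ) (n i j p : ℤ) :
    ENNReal.ofReal (r (n + i) ^ 2 * r (j + p) ^ 2 /
        (((|n - i| : ℤ) : ℝ) * ((|n - j| : ℤ) : ℝ) * ((n - p : ℤ) : ℝ) ^ 2))
      ≤ ENNReal.ofReal (r (n + i) ^ 2) * ENNReal.ofReal (r (j + p) ^ 2) *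
          ((invSq (n - i) + invSq (n - j)) * invSq (n - p)) := by
  have hinv (x : ℝ) : 0 ≤ (x ^ 2)⁻¹ := inv_nonneg.2 (sq_nonneg x)
  rw [invSq, invSq, invSq, ← ENNReal.ofReal_add (hinv _) (hinv _),
    ← ENNReal.ofReal_mul (add_nonneg (hinv _) (hinv _)), ← ENNReal.ofReal_mul (sq_nonneg _),
    ← ENNReal.ofReal_mul (mul_nonneg (sq_nonneg _) (sq_nonneg _))]
  refine ENNReal.ofReal_le_ofReal ?_
  rw [div_eq_mul_inv, mul_inv, Int.cast_abs, Int.cast_abs]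
  gcongr
  exact inv_abs_mul_abs_le _ _

lemma ofReal_tsum_quad_le (r : ℤ → ℝ) (N : ℕ) :
    ENNReal.ofReal (∑' n : {n : ℤ // (N : ℤ) < |n|}, ∑' i : {i : ℤ // i ≠ (n : ℤ)},
        ∑' j : {j : ℤ // j ≠ (n : ℤ)}, ∑' p : {p : ℤ // p ≠ (n : ℤ)},
          (r ((n : ℤ) + (i : ℤ))) ^ 2 * (r ((j : ℤ) + (p : ℤ))) ^ 2 /
            (((|(n : ℤ) - (i : ℤ)| : ℤ) : ℝ) * ((|(n : ℤ) - (j : ℤ)| : ℤ) : ℝ) *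
              (((n : ℤ) - (p : ℤ) : ℤ) : ℝ) ^ 2))
      ≤ ∑' n : {n : ℤ // (N : ℤ) < |n|}, ∑' a, ∑' b, ∑' c,
          ENNReal.ofReal (r (2 * n - a) ^ 2) * ENNReal.ofReal (r (2 * n - b - c) ^ 2) *
            ((invSq a + invSq b) * invSq c) := by
  have hterm (n i j p : ℤ) : 0 ≤ r (n + i) ^ 2 * r (j + p) ^ 2 /
      (((|n - i| : ℤ) : ℝ) * ((|n - j| : ℤ) : ℝ) * ((n - p : ℤ) : ℝ) ^ 2) := by
    rw [Int.cast_abs, Int.cast_abs]; positivity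
  calc _ ≤ ∑' n : {n : ℤ // (N : ℤ) < |n|}, ∑' i : {i : ℤ // i ≠ (n : ℤ)},
        ∑' j : {j : ℤ // j ≠ (n : ℤ)}, ∑' p : {p : ℤ // p ≠ (n : ℤ)},
          ENNReal.ofReal ((r ((n : ℤ) + (i : ℤ))) ^ 2 * (r ((j : ℤ) + (p : ℤ))) ^ 2 /
            (((|(n : ℤ) - (i : ℤ)| : ℤ) : ℝ) * ((|(n : ℤ) - (j : ℤ)| : ℤ) : ℝ) *
              (((n : ℤ) - (p : ℤ) : ℤ) : ℝ) ^ 2)) := by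
        refine (ofReal_tsum_le_tsum_ofReal fun n => tsum_nonneg fun i => tsum_nonneg fun j =>
          tsum_nonneg fun p => hterm _ _ _ _).trans (ENNReal.tsum_le_tsum fun n => ?_)
        refine (ofReal_tsum_le_tsum_ofReal fun i => tsum_nonneg fun j =>
          tsum_nonneg fun p => hterm _ _ _ _).trans (ENNReal.tsum_le_tsum fun i => ?_)
        refine (ofReal_tsum_le_tsum_ofReal fun j =>
          tsum_nonneg fun p => hterm _ _ _ _).trans (ENNReal.tsum_le_tsum fun j => ?_)
        exact ofReal_tsum_le_tsum_ofReal fun p => hterm _ _ _ _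
    _ ≤ ∑' n : {n : ℤ // (N : ℤ) < |n|}, ∑' i : {i : ℤ // i ≠ (n : ℤ)},
        ∑' j : {j : ℤ // j ≠ (n : ℤ)}, ∑' p : {p : ℤ // p ≠ (n : ℤ)},
          ENNReal.ofReal (r (n + i) ^ 2) * ENNReal.ofReal (r (j + p) ^ 2) *
            ((invSq (n - i) + invSq (n - j)) * invSq (n - p)) := by
        gcongr
        exact ofReal_quad_term_le r _ _ _ _
    _ ≤ _ := ENNReal.tsum_le_tsum fun n => (tsum_ne_tsum_ne_tsum_ne_le_tsum_sub (fun i j p =>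
          ENNReal.ofReal (r (n + i) ^ 2) * ENNReal.ofReal (r (j + p) ^ 2) *
            ((invSq (n - i) + invSq (n - j)) * invSq (n - p))) n).trans_eq
        (tsum_congr fun a => tsum_congr fun b => tsum_congr fun c => by ring_nf)

theorem stmt_9 :
    ∃ C : ℝ, 0 < C ∧ ∀ (r : ℤ → ℝ), (∀ k, 0 ≤ r k) →
      Summable (fun k => (r k) ^ 2) → ∀ N : ℕ, 1 ≤ N →
      ∑' n : {n : ℤ // (N : ℤ) < |n|}, ∑' i : {i : ℤ // i ≠ (n : ℤ)},
        ∑' j : {j : ℤ // j ≠ (n : ℤ)}, ∑' p : {p : ℤ // p ≠ (n : ℤ)},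
          (r ((n : ℤ) + (i : ℤ))) ^ 2 * (r ((j : ℤ) + (p : ℤ))) ^ 2 /
            (((|(n : ℤ) - (i : ℤ)| : ℤ) : ℝ) * ((|(n : ℤ) - (j : ℤ)| : ℤ) : ℝ) *
              (((n : ℤ) - (p : ℤ) : ℤ) : ℝ) ^ 2) ≤
        C * ((∑' k : ℤ, (r k) ^ 2) / N +
            ∑' m : {m : ℤ // (N : ℤ) ≤ |m|}, (r (m : ℤ)) ^ 2) *
          (∑' k : ℤ, (r k) ^ 2) := by
  refine ⟨80, by norm_num, fun r _ hsum N hN => ?_⟩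
  have hS : ENNReal.ofReal (∑' k : ℤ, r k ^ 2) = ∑' k, ENNReal.ofReal (r k ^ 2) :=
    ENNReal.ofReal_tsum_of_nonneg (fun k => sq_nonneg _) hsum
  have hE : ENNReal.ofReal (∑' m : {m : ℤ // (N : ℤ) ≤ |m|}, r m ^ 2)
      = ∑' m : {m : ℤ // (N : ℤ) ≤ |m|}, ENNReal.ofReal (r m ^ 2) :=
    ENNReal.ofReal_tsum_of_nonneg (fun k => sq_nonneg _) (hsum.subtype _)
  have hE0 : 0 ≤ ∑' m : {m : ℤ // (N : ℤ) ≤ |m|}, r m ^ 2 := tsum_nonneg fun k => sq_nonneg _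
  rw [← ENNReal.ofReal_le_ofReal_iff (by positivity)]
  refine (ofReal_tsum_quad_le r N).trans
    ((tsum_tail_quad_le (fun k => ENNReal.ofReal (r k ^ 2)) N).trans_eq ?_)
  rw [ENNReal.ofReal_mul (by positivity), ENNReal.ofReal_mul (by norm_num),
    ENNReal.ofReal_add (by positivity) hE0, ENNReal.ofReal_div_of_pos (by positivity), hS, hE]
  norm_num
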